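/- arXiv:1608.03534 — 2 statements merged into one kernel-verified Lean document; each statement's English description precedes it below -/
import Mathlib

section
/- Let V be an n-dimensional real vector space equipped with a nondegenerate symmetric bilinear form (·,·) of signature (n−2,2), and let C₁, C₂, C₁′, C₂′ ∈ V. Assume that for every (s,t) ∈ [0,1]², the bilinear form (·,·) is negative definite on the 2-dimensional subspace z(s,t) := span{B₁(s), B₂(t)}. Let L ⊆ V be a lattice (the ℤ-span of an ℝ-basis of V), let μ ∈ V, and let v > 0. Then the family x ↦ Φ₂(x)·exp(−π·v·(x,x)), indexed by x ∈ L + μ, is absolutely summable, i.e. ∑_{x ∈ L+μ} |Φ₂(x)|·e^{−π v (x,x)} < ∞. (This is the termwise absolute convergence of the q-series ∑_{x ∈ L+μ} Φ₂(x) q^{(x,x)/2} in Theorem B(b).) -/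
/-!
`Φ₂(x)` vanishes unless both `(x, C₁), (x, C₁')` and `(x, C₂), (x, C₂')` differ in sign, i.e.
unless `x` lies in the closed cone `S = {(x,C₁)(x,C₁') ≤ 0, (x,C₂)(x,C₂') ≤ 0}`. A point of `S`
is orthogonal to some `B₁(s)` and some `B₂(t)` (intermediate value theorem), hence to the negative
definite plane `z(s,t)`; as the form has only two negative directions, `(x, x) > 0` for
`x ∈ S \ {0}`. By compactness of the unit sphere, `(x, x) ≥ ε ‖x‖²` on `S`, so the series is
dominated by a Gaussian over the shifted lattice, which factors into one-dimensional Gaussian sums.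
-/

open Real Set

noncomputable section

open Finset in
theorem summable_pi_prod_of_nonneg {ι β : Type*} [Fintype ι] {f : ι → β → ℝ}
    (hf₀ : ∀ i b, 0 ≤ f i b) (hf : ∀ i, Summable (f i)) :
    Summable fun k : ι → β => ∏ i, f i (k i) := by
  classical
  refine summable_of_sum_le (c := ∏ i, ∑' b, f i b)
    (fun k => prod_nonneg fun i _ => hf₀ i (k i)) fun u => ?_
  calc ∑ k ∈ u, ∏ i, f i (k i)
      ≤ ∑ k ∈ Fintype.piFinset fun i => u.image (· i), ∏ i, f i (k i) :=
        sum_le_sum_of_subset_of_nonneg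
          (fun k hk => Fintype.mem_piFinset.2 fun i => mem_image_of_mem _ hk)
          fun k _ _ => prod_nonneg fun i _ => hf₀ i (k i)
    _ = ∏ i, ∑ b ∈ u.image (· i), f i b := (prod_univ_sum _ _).symm
    _ ≤ ∏ i, ∑' b, f i b :=
        prod_le_prod (fun i _ => sum_nonneg fun b _ => hf₀ i b)
          fun i _ => (hf i).sum_le_tsum _ fun b _ => hf₀ i b

theorem summable_exp_neg_mul_int_add_sq {c : ℝ} (hc : 0 < c) (m : ℝ) :
    Summable fun k : ℤ => exp (-c * (k + m) ^ 2) := by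
  refine (HurwitzKernelBounds.summable_f_int 0 m (t := c / π) (by positivity)).congr fun k => ?_
  simp only [HurwitzKernelBounds.f_int, pow_zero, one_mul]
  congr 1
  field_simp

theorem summable_exp_neg_mul_sum_repr_sq_coset {V : Type*} [AddCommGroup V] [Module ℝ V]
    {ι : Type*} [Fintype ι] (b : Module.Basis ι ℝ V) (μ : V) {c : ℝ} (hc : 0 < c) :
    Summable fun x : {x : V // ∃ l ∈ Submodule.span ℤ (Set.range b), x = l + μ} =>
      exp (-c * ∑ i, b.repr x i ^ 2) := by
  let L := Submodule.span ℤ (Set.range b)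
  let translate : L ≃ {x : V // ∃ l ∈ L, x = l + μ} :=
    { toFun := fun l => ⟨l + μ, l, l.2, rfl⟩
      invFun := fun x => ⟨x - μ, by obtain ⟨l, hl, hx⟩ := x.2; simpa [hx] using hl⟩
      left_inv := fun l => by ext; simp
      right_inv := fun x => by ext; simp }
  let bZ := b.restrictScalars ℤ
  have hrepr : ∀ (k : ι → ℤ) i, b.repr (bZ.equivFun.symm k : V) i = k i := fun k i => by
    have hk := congr_fun (bZ.equivFun.apply_symm_apply k) i
    rw [Module.Basis.equivFun_apply] at hk
    rw [← b.restrictScalars_repr_apply ℤ, hk, algebraMap_int_eq, eq_intCast]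
  rw [← (bZ.equivFun.toEquiv.symm.trans translate).summable_iff]
  refine (summable_pi_prod_of_nonneg (fun _ _ => (exp_pos _).le)
    fun i => summable_exp_neg_mul_int_add_sq hc (b.repr μ i)).congr fun k => ?_
  show ∏ i, exp (-c * ((k i : ℝ) + b.repr μ i) ^ 2) =
    exp (-c * ∑ i, b.repr ((bZ.equivFun.symm k : V) + μ) i ^ 2)
  simp only [map_add, Finsupp.add_apply, hrepr, ← exp_sum, Finset.mul_sum]

namespace LinearMap.BilinForm

variable {V : Type*} [AddCommGroup V] [Module ℝ V] {ι : Type*} [Fintype ι]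
  {B : LinearMap.BilinForm ℝ V} {b : Module.Basis ι ℝ V}

theorem apply_self_eq_sum_of_iIsOrtho (hb : B.iIsOrtho b) (w : V) :
    B w w = ∑ i, b.repr w i ^ 2 * B (b i) (b i) := by
  classical
  conv_lhs => rw [← b.sum_repr w]
  simp only [map_sum, map_smul, LinearMap.sum_apply, LinearMap.smul_apply, smul_eq_mul]
  refine Finset.sum_congr rfl fun i _ => ?_
  rw [Finset.sum_eq_single i (fun j _ hji => by rw [hb hji, mul_zero]) (by simp)]
  ring

theorem finrank_le_card_of_apply_self_nonpos (hb : B.iIsOrtho b) {U : Submodule ℝ V}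
    (hU : ∀ w ∈ U, B w w ≤ 0) :
    Module.finrank ℝ U ≤ Fintype.card {i // B (b i) (b i) ≤ 0} := by
  let T : U →ₗ[ℝ] {i // B (b i) (b i) ≤ 0} → ℝ :=
    (LinearMap.pi fun i => b.coord i) ∘ₗ U.subtype
  suffices hT : Function.Injective T by
    simpa using LinearMap.finrank_le_finrank_of_injective hT
  rw [← LinearMap.ker_eq_bot, Submodule.eq_bot_iff]
  rintro ⟨w, hw⟩ hTw
  have hnonpos : ∀ i, B (b i) (b i) ≤ 0 → b.repr w i = 0 := fun i hi =>
    _root_.congr_fun (show T ⟨w, hw⟩ = 0 from hTw) ⟨i, hi⟩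
  have hterm : ∀ i, 0 ≤ b.repr w i ^ 2 * B (b i) (b i) := fun i => by
    rcases le_or_gt (B (b i) (b i)) 0 with hi | hi
    · simp [hnonpos i hi]
    · positivity
  have hzero := (Finset.sum_eq_zero_iff_of_nonneg fun i _ => hterm i).1
    (le_antisymm ((apply_self_eq_sum_of_iIsOrtho hb w).symm ▸ hU w hw)
      (Finset.sum_nonneg fun i _ => hterm i))
  have : b.repr w = 0 := Finsupp.ext fun i => by
    rcases le_or_gt (B (b i) (b i)) 0 with hi | hi
    · exact hnonpos i hi
    · simpa [hi.ne'] using hzero i (Finset.mem_univ i)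
  simpa using this

theorem apply_self_pos_of_forall_apply_eq_zero [FiniteDimensional ℝ V] (hB : B.IsSymm) {k : ℕ}
    (hk : ∀ U : Submodule ℝ V, (∀ w ∈ U, B w w ≤ 0) → Module.finrank ℝ U ≤ k)
    {W : Submodule ℝ V} (hWk : Module.finrank ℝ W = k) (hW : ∀ w ∈ W, w ≠ 0 → B w w < 0)
    {x : V} (hx : x ≠ 0) (hxW : ∀ w ∈ W, B x w = 0) : 0 < B x x := by
  by_contra! hxx
  -- otherwise `W ⊔ ℝ ∙ x` is a nonpositive subspace of dimension `k + 1`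
  have hxW' : x ∉ W := fun h => (hW x h hx).ne (hxW x h)
  have hlt : W < W ⊔ Submodule.span ℝ {x} :=
    SetLike.lt_iff_le_and_exists.2
      ⟨le_sup_left, x, Submodule.mem_sup_right (Submodule.mem_span_singleton_self x), hxW'⟩
  have hnonpos : ∀ w ∈ W ⊔ Submodule.span ℝ {x}, B w w ≤ 0 := by
    intro w hw
    obtain ⟨u, hu, y, hy, rfl⟩ := Submodule.mem_sup.1 hw
    obtain ⟨a, rfl⟩ := Submodule.mem_span_singleton.1 hy
    have hux : B u x = 0 := by rw [← hB.eq, hxW u hu]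
    have huu : B u u ≤ 0 := by
      rcases eq_or_ne u 0 with rfl | hu0
      · simp
      · exact (hW u hu hu0).le
    simp only [map_add, map_smul, LinearMap.add_apply, LinearMap.smul_apply, smul_eq_mul,
      hxW u hu, hux]
    nlinarith [sq_nonneg a]
  exact (Submodule.finrank_lt_finrank_of_lt hlt).not_ge (hWk ▸ hk _ hnonpos)

end LinearMap.BilinForm

theorem Fin.card_subtype_nonpos_le {n k : ℕ} {d : Fin n → ℝ}
    (hd : ∀ i : Fin n, (i : ℕ) < n - k → 0 < d i) : Fintype.card {i // d i ≤ 0} ≤ k := by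
  have hge : ∀ i : {i // d i ≤ 0}, n - k ≤ (i : ℕ) := fun i =>
    not_lt.1 fun h => (hd i h).not_ge i.2
  simpa using Fintype.card_le_of_injective
    (fun i : {i // d i ≤ 0} => (⟨i.1 - (n - k), by have := hge i; have := i.1.isLt; omega⟩ : Fin k))
    fun i j hij => Subtype.ext (Fin.ext (by have := hge i; have := hge j; simp at hij; omega))

theorem exists_pos_mul_norm_sq_le_of_isClosed {E : Type*} [NormedAddCommGroup E]
    [NormedSpace ℝ E] [FiniteDimensional ℝ E] {Q : E → ℝ} (hQ : Continuous Q)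
    (hQ_smul : ∀ (c : ℝ) (y : E), Q (c • y) = c ^ 2 * Q y) {S : Set E} (hS : IsClosed S)
    (hS_smul : ∀ c : ℝ, 0 < c → ∀ y ∈ S, c • y ∈ S) (hpos : ∀ y ∈ S, y ≠ 0 → 0 < Q y) :
    ∃ ε > 0, ∀ y ∈ S, ε * ‖y‖ ^ 2 ≤ Q y := by
  obtain ⟨ε, hε, hεQ⟩ : ∃ ε > 0, ∀ y ∈ S ∩ Metric.sphere 0 1, ε ≤ Q y := by
    rcases (S ∩ Metric.sphere (0 : E) 1).eq_empty_or_nonempty with h | h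
    · exact ⟨1, one_pos, by simp [h]⟩
    · obtain ⟨y₀, hy₀, hmin⟩ :=
        ((isCompact_sphere 0 1).inter_left hS).exists_isMinOn h hQ.continuousOn
      exact ⟨Q y₀, hpos y₀ hy₀.1 (ne_zero_of_mem_unit_sphere ⟨y₀, hy₀.2⟩), fun y hy => hmin hy⟩
  refine ⟨ε, hε, fun y hy => ?_⟩
  rcases eq_or_ne y 0 with rfl | hy0
  · simpa using (hQ_smul 0 0).ge
  have hr : 0 < ‖y‖ := norm_pos_iff.2 hy0
  have hεy := hεQ (‖y‖⁻¹ • y) ⟨hS_smul _ (inv_pos.2 hr) y hy, by simp [norm_smul, hr.ne']⟩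
  rw [hQ_smul] at hεy
  calc ε * ‖y‖ ^ 2 ≤ ‖y‖⁻¹ ^ 2 * Q y * ‖y‖ ^ 2 := by gcongr
    _ = Q y := by field_simp

theorem Real.sign_eq_sign_of_mul_pos {a b : ℝ} (h : 0 < a * b) : sign a = sign b := by
  rcases mul_pos_iff.1 h with ⟨ha, hb⟩ | ⟨ha, hb⟩
  · rw [sign_of_pos ha, sign_of_pos hb]
  · rw [sign_of_neg ha, sign_of_neg hb]

theorem Real.abs_sign_sub_sign_le_two (a b : ℝ) : |sign a - sign b| ≤ 2 := by
  rcases sign_apply_eq a with h | h | h <;> rcases sign_apply_eq b with h' | h' | h' <;>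
    norm_num [h, h']

theorem exists_mem_Icc_one_sub_mul_add_mul_eq_zero {a b : ℝ} (h : a * b ≤ 0) :
    ∃ s ∈ Icc (0 : ℝ) 1, (1 - s) * a + s * b = 0 := by
  have h0 : (0 : ℝ) ∈ uIcc a b := by
    rcases le_total a 0 with ha | ha <;> rcases le_total b 0 with hb | hb
    · rcases mul_eq_zero.1 (le_antisymm h (mul_nonneg_of_nonpos_of_nonpos ha hb)) with rfl | rfl
      <;> simp [hb, ha]
    · exact mem_uIcc.2 (Or.inl ⟨ha, hb⟩)
    · exact mem_uIcc.2 (Or.inr ⟨hb, ha⟩)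
    · rcases mul_eq_zero.1 (le_antisymm h (mul_nonneg ha hb)) with rfl | rfl <;> simp [hb, ha]
  obtain ⟨s, hs, hs0⟩ := intermediate_value_uIcc (a := (0 : ℝ)) (b := 1)
    (f := fun s => (1 - s) * a + s * b) (by fun_prop) (by simpa using h0)
  exact ⟨s, by simpa using hs, hs0⟩

section SignChange

variable {V : Type*} [AddCommGroup V] [Module ℝ V]

def phi2 (B : LinearMap.BilinForm ℝ V) (C₁ C₂ C₁' C₂' : V) (x : V) : ℝ :=
  (1/4 : ℝ) * (sign (B x C₁) - sign (B x C₁')) * (sign (B x C₂) - sign (B x C₂'))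

def signChangeCone (B : LinearMap.BilinForm ℝ V) (C₁ C₂ C₁' C₂' : V) : Set V :=
  {x | B x C₁ * B x C₁' ≤ 0 ∧ B x C₂ * B x C₂' ≤ 0}

variable {B : LinearMap.BilinForm ℝ V} {C₁ C₂ C₁' C₂' : V}

theorem abs_phi2_le_one (x : V) : |phi2 B C₁ C₂ C₁' C₂' x| ≤ 1 := by
  rw [phi2, abs_mul, abs_mul]
  have h₁ := abs_sign_sub_sign_le_two (B x C₁) (B x C₁')
  have h₂ := abs_sign_sub_sign_le_two (B x C₂) (B x C₂')
  calc |(1 / 4 : ℝ)| * |sign (B x C₁) - sign (B x C₁')| * |sign (B x C₂) - sign (B x C₂')|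
      ≤ 1 / 4 * 2 * 2 := by rw [abs_of_pos (by norm_num)]; gcongr
    _ = 1 := by norm_num

theorem phi2_eq_zero_of_notMem_signChangeCone {x : V} (hx : x ∉ signChangeCone B C₁ C₂ C₁' C₂') :
    phi2 B C₁ C₂ C₁' C₂' x = 0 := by
  simp only [signChangeCone, mem_ofPred_eq, not_and_or, not_le] at hx
  rcases hx with h | h <;> simp [phi2, sign_eq_sign_of_mul_pos h]

theorem exists_mem_Icc_apply_one_sub_smul_add_smul_eq_zero {x C C' : V} (h : B x C * B x C' ≤ 0) :
    ∃ s ∈ Icc (0 : ℝ) 1, B x ((1 - s) • C + s • C') = 0 := by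
  simpa using exists_mem_Icc_one_sub_mul_add_mul_eq_zero h

theorem apply_self_pos_of_mem_signChangeCone [FiniteDimensional ℝ V] (hB : B.IsSymm)
    (hdim : ∀ U : Submodule ℝ V, (∀ w ∈ U, B w w ≤ 0) → Module.finrank ℝ U ≤ 2)
    (hneg : ∀ s ∈ Icc (0:ℝ) 1, ∀ t ∈ Icc (0:ℝ) 1,
      LinearIndependent ℝ ![(1 - s) • C₁ + s • C₁', (1 - t) • C₂ + t • C₂'] ∧
      ∀ w ∈ Submodule.span ℝ {(1 - s) • C₁ + s • C₁', (1 - t) • C₂ + t • C₂'},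
        w ≠ 0 → B w w < 0)
    {x : V} (hx : x ∈ signChangeCone B C₁ C₂ C₁' C₂') (hx0 : x ≠ 0) : 0 < B x x := by
  obtain ⟨s, hs, hxs⟩ := exists_mem_Icc_apply_one_sub_smul_add_smul_eq_zero hx.1
  obtain ⟨t, ht, hxt⟩ := exists_mem_Icc_apply_one_sub_smul_add_smul_eq_zero hx.2
  obtain ⟨hli, hW⟩ := hneg s hs t ht
  refine LinearMap.BilinForm.apply_self_pos_of_forall_apply_eq_zero hB hdim ?_ hW hx0 ?_
  · have := finrank_span_eq_card hli
    rwa [Matrix.range_cons_cons_empty, Fintype.card_fin] at this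
  · intro w hw
    obtain ⟨a, c, rfl⟩ := Submodule.mem_span_pair.1 hw
    rw [map_add, map_smul, map_smul, hxs, hxt, smul_zero, smul_zero, add_zero]

theorem exists_pos_mul_sum_repr_sq_le {ι : Type*} [Fintype ι] (b : Module.Basis ι ℝ V)
    (hpos : ∀ x ∈ signChangeCone B C₁ C₂ C₁' C₂', x ≠ 0 → 0 < B x x) :
    ∃ ε > 0, ∀ x ∈ signChangeCone B C₁ C₂ C₁' C₂', ε * ∑ i, b.repr x i ^ 2 ≤ B x x := by
  let e : EuclideanSpace ℝ ι ≃ₗ[ℝ] V := (WithLp.linearEquiv 2 ℝ (ι → ℝ)).trans b.equivFun.symm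
  have hcont : ∀ w, Continuous fun y => B (e y) w := fun w =>
    LinearMap.continuous_of_finiteDimensional (B.flip w ∘ₗ e.toLinearMap)
  have hQ : Continuous fun y => B (e y) (e y) :=
    (B.compl₁₂ e.toLinearMap e.toLinearMap).toContinuousBilinearMap.continuous₂.comp
      (continuous_id.prodMk continuous_id)
  obtain ⟨ε, hε, hεQ⟩ := exists_pos_mul_norm_sq_le_of_isClosed hQ
    (fun c y => by simp only [map_smul, LinearMap.smul_apply, smul_eq_mul]; ring)
    (S := e ⁻¹' signChangeCone B C₁ C₂ C₁' C₂')
    ((isClosed_le ((hcont C₁).mul (hcont C₁')) continuous_const).inter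
      (isClosed_le ((hcont C₂).mul (hcont C₂')) continuous_const))
    (fun c hc y hy => by
      simp only [mem_preimage, signChangeCone, mem_ofPred_eq, map_smul, LinearMap.smul_apply,
        smul_eq_mul] at hy ⊢
      constructor <;> nlinarith [hy.1, hy.2, mul_pos hc hc])
    (fun y hy hy0 => hpos _ hy (by simpa using hy0))
  refine ⟨ε, hε, fun x hx => ?_⟩
  simpa [EuclideanSpace.real_norm_sq_eq, e] using hεQ (e.symm x) (by simpa using hx)

theorem abs_phi2_mul_exp_le {ι : Type*} [Fintype ι] (b : Module.Basis ι ℝ V) {ε v : ℝ} (hv : 0 < v)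
    (hε : ∀ x ∈ signChangeCone B C₁ C₂ C₁' C₂', ε * ∑ i, b.repr x i ^ 2 ≤ B x x) (x : V) :
    |phi2 B C₁ C₂ C₁' C₂' x| * exp (-π * v * B x x) ≤
      exp (-(π * v * ε) * ∑ i, b.repr x i ^ 2) := by
  by_cases hx : x ∈ signChangeCone B C₁ C₂ C₁' C₂'
  · calc |phi2 B C₁ C₂ C₁' C₂' x| * exp (-π * v * B x x) ≤ 1 * exp (-π * v * B x x) :=
          mul_le_mul_of_nonneg_right (abs_phi2_le_one x) (exp_pos _).le
      _ ≤ exp (-(π * v * ε) * ∑ i, b.repr x i ^ 2) := by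
          rw [one_mul, exp_le_exp, neg_mul, neg_mul, neg_mul, neg_le_neg_iff, mul_assoc]
          exact mul_le_mul_of_nonneg_left (hε x hx) (by positivity)
  · rw [phi2_eq_zero_of_notMem_signChangeCone hx, abs_zero, zero_mul]
    exact (exp_pos _).le

end SignChange

theorem summable_phi_qseries_general
    {V : Type*} [AddCommGroup V] [Module ℝ V]
    (n : ℕ)
    (B : LinearMap.BilinForm ℝ V) (hsymm : B.IsSymm)
    (bsig : Module.Basis (Fin n) ℝ V)
    (horth : ∀ i j, i ≠ j → B (bsig i) (bsig j) = 0)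
    (hsig : ∀ i : Fin n, ((i : ℕ) < n - 2 → 0 < B (bsig i) (bsig i)) ∧
        (n - 2 ≤ (i : ℕ) → B (bsig i) (bsig i) < 0))
    (C₁ C₂ C₁' C₂' : V)
    (hneg : ∀ s ∈ Icc (0:ℝ) 1, ∀ t ∈ Icc (0:ℝ) 1,
      LinearIndependent ℝ ![(1 - s) • C₁ + s • C₁', (1 - t) • C₂ + t • C₂'] ∧
      ∀ w ∈ Submodule.span ℝ {(1 - s) • C₁ + s • C₁', (1 - t) • C₂ + t • C₂'},
        w ≠ 0 → B w w < 0)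
    (bL : Module.Basis (Fin n) ℝ V) (μ : V) (v : ℝ) (hv : 0 < v) :
    Summable (fun x : {x : V // ∃ l ∈ Submodule.span ℤ (Set.range ⇑bL), x = l + μ} =>
      |(1/4 : ℝ) * (Real.sign (B x C₁) - Real.sign (B x C₁')) *
          (Real.sign (B x C₂) - Real.sign (B x C₂'))| *
        Real.exp (-Real.pi * v * B x x)) := by
  have := Module.Finite.of_basis bsig
  have hdim : ∀ U : Submodule ℝ V, (∀ w ∈ U, B w w ≤ 0) → Module.finrank ℝ U ≤ 2 :=
    fun U hU => (B.finrank_le_card_of_apply_self_nonpos horth hU).trans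
      (Fin.card_subtype_nonpos_le fun i hi => (hsig i).1 hi)
  obtain ⟨ε, hε, hεB⟩ := exists_pos_mul_sum_repr_sq_le bL fun x hx hx0 =>
    apply_self_pos_of_mem_signChangeCone hsymm hdim hneg hx hx0
  exact Summable.of_nonneg_of_le (fun x => by positivity) (fun x => abs_phi2_mul_exp_le bL hv hεB x)
    (summable_exp_neg_mul_sum_repr_sq_coset bL μ (by positivity))

/-- Theorem B(b) / Proposition 4.10 of the paper: termwise absolute convergence
of the holomorphic generating series `∑_{x ∈ L+μ} Φ₂(x) q^{(x,x)/2}`: the family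
`x ↦ Φ₂(x)·e^{−πv(x,x)}`, indexed by `x ∈ L + μ` for a lattice `L` (the ℤ-span
of an ℝ-basis of `V`), is absolutely summable. -/
theorem summable_phi_qseries
    {V : Type*} [AddCommGroup V] [Module ℝ V]
    (n : ℕ) (hn : 2 ≤ n)
    (B : LinearMap.BilinForm ℝ V) (hsymm : B.IsSymm) (hnd : B.Nondegenerate)
    (bsig : Module.Basis (Fin n) ℝ V)
    (horth : ∀ i j, i ≠ j → B (bsig i) (bsig j) = 0)
    (hsig : ∀ i : Fin n, ((i : ℕ) < n - 2 → 0 < B (bsig i) (bsig i)) ∧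
        (n - 2 ≤ (i : ℕ) → B (bsig i) (bsig i) < 0))
    (C₁ C₂ C₁' C₂' : V)
    (hneg : ∀ s ∈ Icc (0:ℝ) 1, ∀ t ∈ Icc (0:ℝ) 1,
      LinearIndependent ℝ ![(1 - s) • C₁ + s • C₁', (1 - t) • C₂ + t • C₂'] ∧
      ∀ w ∈ Submodule.span ℝ {(1 - s) • C₁ + s • C₁', (1 - t) • C₂ + t • C₂'},
        w ≠ 0 → B w w < 0)
    (bL : Module.Basis (Fin n) ℝ V) (μ : V) (v : ℝ) (hv : 0 < v) :
    Summable (fun x : {x : V // ∃ l ∈ Submodule.span ℤ (Set.range ⇑bL), x = l + μ} =>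
      |(1/4 : ℝ) * (Real.sign (B x C₁) - Real.sign (B x C₁')) *
          (Real.sign (B x C₂) - Real.sign (B x C₂'))| *
        Real.exp (-Real.pi * v * B x x)) :=
  summable_phi_qseries_general n B hsymm bsig horth hsig C₁ C₂ C₁' C₂' hneg bL μ v hv
end
end

section
/- Let W be a finite-dimensional real vector space equipped with a nondegenerate symmetric bilinear form (·,·) of signature (m,1) with m ≥ 1, and let H := {u ∈ W : (u,u) = −1}. Then for v, v′ ∈ H, the points v and v′ lie in the same path component of H (i.e. there is a continuous path from v to v′ inside H) if and only if (v,v′) < 0. -/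
/-!
The map `u ↦ (v,u)` is continuous and does not vanish on `H`: the form is positive semidefinite
on the span `P` of the first `m` basis vectors, a hyperplane, while two orthogonal negative
vectors would span a negative definite plane meeting `P` only in `0`. So its sign is constant
along any path in `H`. Conversely, if `(v,v') < 0` then the segment `[v,v']` consists of negative
vectors, and its radial projection `u ↦ (-(u,u))^{-1/2} u` onto `H` is a path from `v` to `v'`.
-/

open Module

namespace LinearMap.BilinForm

variable {W : Type*} [AddCommGroup W] [Module ℝ W] {B : LinearMap.BilinForm ℝ W}

theorem apply_sum_smul_self_of_iIsOrtho {ι : Type*} [Fintype ι] {v : ι → W}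
    (hv : B.iIsOrtho v) (c : ι → ℝ) :
    B (∑ i, c i • v i) (∑ i, c i • v i) = ∑ i, c i ^ 2 * B (v i) (v i) := by
  simp only [map_sum, map_smul, LinearMap.sum_apply, LinearMap.smul_apply, smul_eq_mul]
  refine Finset.sum_congr rfl fun i _ => ?_
  rw [Finset.sum_eq_single i (fun j _ hji => by rw [iIsOrtho_def.1 hv j i hji]; ring)
    (by simp)]
  ring

theorem apply_self_nonneg_of_mem_span {ι : Type*} [Fintype ι] {v : ι → W}
    (hv : B.iIsOrtho v) (hnonneg : ∀ i, 0 ≤ B (v i) (v i)) {x : W}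
    (hx : x ∈ Submodule.span ℝ (Set.range v)) : 0 ≤ B x x := by
  obtain ⟨c, rfl⟩ := Submodule.mem_span_range_iff_exists_fun ℝ |>.1 hx
  rw [apply_sum_smul_self_of_iIsOrtho hv]
  exact Finset.sum_nonneg fun i _ => mul_nonneg (sq_nonneg _) (hnonneg i)

theorem apply_smul_add_smul_self (hB : B.IsSymm) (u w : W) (a d : ℝ) :
    B (a • u + d • w) (a • u + d • w) =
      a ^ 2 * B u u + 2 * a * d * B u w + d ^ 2 * B w w := by
  have := hB.eq w u
  simp only [map_add, map_smul, LinearMap.add_apply, LinearMap.smul_apply, smul_eq_mul] at this ⊢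
  rw [this]
  ring

theorem apply_smul_add_smul_self_neg (hB : B.IsSymm) {u w : W} (hu : B u u < 0)
    (hw : B w w < 0) (huw : B u w = 0) {a d : ℝ} (had : a ≠ 0 ∨ d ≠ 0) :
    B (a • u + d • w) (a • u + d • w) < 0 := by
  rw [apply_smul_add_smul_self hB, huw]
  rcases had with ha | hd
  · nlinarith [sq_pos_of_ne_zero ha, sq_nonneg d]
  · nlinarith [sq_pos_of_ne_zero hd, sq_nonneg a]

theorem apply_ne_zero_of_apply_self_neg [FiniteDimensional ℝ W] (hB : B.IsSymm)
    (P : Submodule ℝ W) (hP : ∀ x ∈ P, 0 ≤ B x x)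
    (hcodim : finrank ℝ W ≤ finrank ℝ P + 1) {u w : W} (hu : B u u < 0) (hw : B w w < 0) :
    B u w ≠ 0 := by
  intro huw
  have hneg {a d : ℝ} (had : a ≠ 0 ∨ d ≠ 0) := apply_smul_add_smul_self_neg hB hu hw huw had
  have hli : LinearIndependent ℝ ![u, w] := by
    refine LinearIndependent.pair_iff.2 fun a d h => ?_
    by_contra had
    simpa [h] using hneg (not_and_or.1 had)
  have hdisj : Disjoint P (Submodule.span ℝ {u, w}) := by
    refine Submodule.disjoint_def.2 fun x hxP hx => ?_
    obtain ⟨a, d, rfl⟩ := Submodule.mem_span_pair.1 hx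
    by_contra hx0
    have had : a ≠ 0 ∨ d ≠ 0 := by
      by_contra! h
      simp [h.1, h.2] at hx0
    exact (hneg had).not_ge (hP _ hxP)
  have := Submodule.finrank_add_finrank_le_of_disjoint hdisj
  rw [← Matrix.range_cons_cons_empty, finrank_span_eq_card hli] at this
  simp at this
  omega

theorem apply_self_neg_of_mem_segment (hB : B.IsSymm) {u w z : W} (hu : B u u < 0)
    (hw : B w w < 0) (huw : B u w < 0) (hz : z ∈ segment ℝ u w) : B z z < 0 := by
  obtain ⟨a, d, ha, hd, had, rfl⟩ := hz
  rw [apply_smul_add_smul_self hB]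
  rcases ha.lt_or_eq with ha | rfl
  · nlinarith [mul_nonneg ha.le hd, sq_nonneg d, sq_pos_of_pos ha]
  · obtain rfl : d = 1 := by linarith
    simpa using hw

end LinearMap.BilinForm

theorem JoinedIn.neg_of_forall_ne_zero {X : Type*} [TopologicalSpace X] {S : Set X} {x y : X}
    (h : JoinedIn S x y) {f : X → ℝ} (hf : Continuous f) (hS : ∀ z ∈ S, f z ≠ 0)
    (hx : f x < 0) : f y < 0 := by
  by_contra! hy
  have hmem : (0 : ℝ) ∈ Set.Icc (f (h.somePath 0)) (f (h.somePath 1)) := by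
    simpa using ⟨hx.le, hy⟩
  obtain ⟨t, ht⟩ := intermediate_value_univ 0 1 (hf.comp h.somePath.continuous) hmem
  exact hS _ (h.somePath_mem t) ht

namespace LinearMap.BilinForm

variable {W : Type*} [NormedAddCommGroup W] [NormedSpace ℝ W] [FiniteDimensional ℝ W]

theorem continuous_apply_self (B : LinearMap.BilinForm ℝ W) : Continuous fun u => B u u :=
  B.toContinuousBilinearMap.continuous₂.comp (continuous_id.prodMk continuous_id)

theorem joinedIn_hyperboloid_of_joinedIn_neg {B : LinearMap.BilinForm ℝ W} {x y : W}
    (h : JoinedIn {u | B u u < 0} x y) (hx : B x x = -1) (hy : B y y = -1) :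
    JoinedIn {u | B u u = -1} x y := by
  set f : W → W := fun u => (√(-B u u))⁻¹ • u
  have hfix {u : W} (hu : B u u = -1) : f u = u := by simp [f, hu]
  have hf : ContinuousOn f {u | B u u < 0} := by
    refine ContinuousOn.smul (ContinuousOn.inv₀ ?_ fun u hu => ?_) continuousOn_id
    · exact (B.continuous_apply_self.neg.sqrt).continuousOn
    · exact (Real.sqrt_pos.2 (neg_pos.2 hu)).ne'
  refine hfix hx ▸ hfix hy ▸ (h.map_continuousOn hf).mono ?_
  rintro _ ⟨u, hu, rfl⟩
  replace hu : B u u < 0 := hu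
  show B (f u) (f u) = -1
  simp only [f, map_smul, LinearMap.smul_apply, smul_eq_mul]
  field_simp
  rw [Real.sq_sqrt (neg_nonneg.2 hu.le), div_neg, div_self hu.ne]

end LinearMap.BilinForm

open LinearMap.BilinForm

theorem hyperboloid_joinedIn_iff_general
    {W : Type*} [NormedAddCommGroup W] [NormedSpace ℝ W] [FiniteDimensional ℝ W]
    (m : ℕ)
    (B : LinearMap.BilinForm ℝ W) (hsymm : B.IsSymm)
    (b : Module.Basis (Fin (m + 1)) ℝ W)
    (horth : ∀ i j, i ≠ j → B (b i) (b j) = 0)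
    (hsig : ∀ i : Fin (m + 1), ((i : ℕ) < m → 0 < B (b i) (b i)) ∧
        ((i : ℕ) = m → B (b i) (b i) < 0))
    (v v' : W) (hv : B v v = -1) (hv' : B v' v' = -1) :
    JoinedIn {u : W | B u u = -1} v v' ↔ B v v' < 0 := by
  set P := Submodule.span ℝ (Set.range (b ∘ Fin.castSucc))
  have hP : ∀ x ∈ P, 0 ≤ B x x :=
    fun _ => apply_self_nonneg_of_mem_span
      (iIsOrtho_def.2 fun i j hij => horth _ _ ((Fin.castSucc_injective m).ne hij))
      fun i => ((hsig i.castSucc).1 i.isLt).le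
  have hcodim : finrank ℝ W ≤ finrank ℝ P + 1 := by
    rw [finrank_span_eq_card (b.linearIndependent.comp _ (Fin.castSucc_injective m)),
      finrank_eq_card_basis b]
    simp
  have hne {u w : W} (hu : B u u < 0) (hw : B w w < 0) : B u w ≠ 0 :=
    apply_ne_zero_of_apply_self_neg hsymm P hP hcodim hu hw
  constructor
  · intro h
    exact h.neg_of_forall_ne_zero (B v).continuous_of_finiteDimensional
      (fun z hz => hne (by linarith) (by rw [hz]; norm_num)) (by linarith)
  · intro hvv'
    refine joinedIn_hyperboloid_of_joinedIn_neg (.of_segment_subset fun z hz => ?_) hv hv'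
    exact apply_self_neg_of_mem_segment hsymm (by linarith) (by linarith) hvv' hz

/-- In a Lorentzian space of signature `(m,1)`, `m ≥ 1`, two points `v, v′` of
the two-sheeted hyperboloid `H = {u : (u,u) = −1}` lie in the same path
component of `H` iff `(v,v′) < 0`. -/
theorem hyperboloid_joinedIn_iff
    {W : Type*} [NormedAddCommGroup W] [NormedSpace ℝ W] [FiniteDimensional ℝ W]
    (m : ℕ) (hm : 1 ≤ m)
    (B : LinearMap.BilinForm ℝ W) (hsymm : B.IsSymm) (hnd : B.Nondegenerate)
    (b : Module.Basis (Fin (m + 1)) ℝ W)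
    (horth : ∀ i j, i ≠ j → B (b i) (b j) = 0)
    (hsig : ∀ i : Fin (m + 1), ((i : ℕ) < m → 0 < B (b i) (b i)) ∧
        ((i : ℕ) = m → B (b i) (b i) < 0))
    (v v' : W) (hv : B v v = -1) (hv' : B v' v' = -1) :
    JoinedIn {u : W | B u u = -1} v v' ↔ B v v' < 0 :=
  hyperboloid_joinedIn_iff_general m B hsymm b horth hsig v v' hv hv'
end
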